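/- Let p be a prime, let Λ = ℤ_p[[T]] be the ring of formal power series over the p-adic integers, and let X be a finitely generated Λ-module with torsion submodule D (the submodule of elements annihilated by some nonzero element of Λ). Assume that D/pD is finite and that X/pX is isomorphic as a Λ-module to Λ/pΛ (i.e., X/pX is a free module of rank 1 over Λ̄ = Λ/pΛ ≅ 𝔽_p[[T]]). Then X is a free Λ-module of rank 1. -/

import Mathlib

/-!
By Nakayama's lemma over the local ring `Λ`, a lift `x` of a generator of `X/pX` generates `X`,
so `X ≅ Λ / ann(x)`. If `ann(x) ≠ 0` then `X` is torsion, since `Λ` is a domain; then `D = X`,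
and `D/pD ≅ X/pX ≅ Λ/pΛ ≅ 𝔽_p[[T]]` would be finite, which it is not. Hence `X ≅ Λ`.
-/

open Submodule Pointwise

theorem LinearMap.range_smul_id {R M : Type*} [CommSemiring R] [AddCommMonoid M] [Module R M]
    (r : R) : range (r • LinearMap.id : M →ₗ[R] M) = r • ⊤ := by
  rw [pointwise_smul_def, ← LinearMap.range_eq_map]
  rfl

theorem PowerSeries.infinite_quotient_span_C {R : Type*} [CommRing R] {a : R}
    (ha : ¬IsUnit a) : Infinite (PowerSeries R ⧸ Ideal.span {C a}) := by
  refine Infinite.of_injective (fun n : ℕ => Ideal.Quotient.mk _ (X ^ n)) fun n m h => ?_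
  by_contra hnm
  obtain ⟨g, hg⟩ := Ideal.mem_span_singleton'.mp (Ideal.Quotient.eq.mp h)
  have hcoeff := congrArg (coeff n) hg
  rw [mul_comm, coeff_C_mul, map_sub, coeff_X_pow_self, coeff_X_pow, if_neg hnm, sub_zero] at hcoeff
  exact ha (.of_mul_eq_one _ hcoeff)

noncomputable def LinearEquiv.quotientSmulTop {R M N : Type*} [CommRing R] [AddCommGroup M]
    [Module R M] [AddCommGroup N] [Module R N] (e : M ≃ₗ[R] N) (r : R) :
    (M ⧸ r • (⊤ : Submodule R M)) ≃ₗ[R] N ⧸ r • (⊤ : Submodule R N) :=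
  Quotient.equiv _ _ e (by simp [map_pointwise_smul])

section

variable {R M : Type*} [CommRing R] [AddCommGroup M] [Module R M]

theorem Submodule.exists_span_singleton_eq_top_of_quotient_smul_equiv [Module.Finite R M]
    {r : R} (hr : r ∈ Ideal.jacobson ⊥) {J : Ideal R}
    (e : (M ⧸ r • (⊤ : Submodule R M)) ≃ₗ[R] R ⧸ J) : ∃ x : M, span R {x} = ⊤ := by
  obtain ⟨x, hx⟩ := (r • ⊤ : Submodule R M).mkQ_surjective (e.symm (J.mkQ 1))
  refine ⟨x, ?_⟩
  rw [LinearMap.span_singleton_eq_range, LinearMap.range_eq_top]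
  refine LinearMap.surjective_of_surjective_comp_mkQ _ (Ideal.span {r})
    (Ideal.span_singleton_le_iff_mem _ |>.mpr hr) ?_
  rw [ideal_span_singleton_smul]
  have hcomp : (r • ⊤ : Submodule R M).mkQ ∘ₗ LinearMap.toSpanSingleton R M x =
      e.symm.toLinearMap ∘ₗ J.mkQ := by
    ext
    simp [hx]
  rw [hcomp]
  exact e.symm.surjective.comp J.mkQ_surjective

theorem LinearMap.injective_toSpanSingleton_of_torsion_ne_top [NoZeroDivisors R] {x : M}
    (hx : span R {x} = ⊤) (hM : torsion R M ≠ ⊤) :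
    Function.Injective (LinearMap.toSpanSingleton R M x) := by
  rw [← ker_eq_bot, ker_eq_bot']
  intro a ha
  by_contra ha0
  refine hM (eq_top_iff.mpr fun z _ => ?_)
  obtain ⟨b, rfl⟩ := mem_span_singleton.mp (hx ▸ mem_top : z ∈ span R {x})
  exact (mem_torsion_iff _).mpr ⟨⟨a, mem_nonZeroDivisors_of_ne_zero ha0⟩,
    by simpa [smul_comm a b] using congrArg (b • ·) ha⟩

theorem Submodule.ne_top_of_finite_quotient_smul_top {N : Submodule R M} {r : R}
    (hN : Finite (N ⧸ r • (⊤ : Submodule R N)))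
    (hM : Infinite (M ⧸ r • (⊤ : Submodule R M))) :
    N ≠ ⊤ := fun htop =>
  have := Finite.of_equiv _ ((LinearEquiv.ofTop _ htop).quotientSmulTop r).toEquiv
  not_finite (M ⧸ r • (⊤ : Submodule R M))

end

/-- Let `Λ = ℤ_p[[T]]` and `X` a finitely generated `Λ`-module with torsion submodule
`D`. If `D/pD` is finite and `X/pX ≅ Λ/pΛ` as `Λ`-modules, then `X` is a free
`Λ`-module of rank 1. -/
theorem free_rank_one_of_mu_zero (p : ℕ) [Fact p.Prime]
    (X : Type*) [AddCommGroup X] [Module (PowerSeries ℤ_[p]) X]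
    [Module.Finite (PowerSeries ℤ_[p]) X]
    (hD : Finite ((Submodule.torsion (PowerSeries ℤ_[p]) X) ⧸
      LinearMap.range (((p : PowerSeries ℤ_[p])) •
        (LinearMap.id : (Submodule.torsion (PowerSeries ℤ_[p]) X) →ₗ[PowerSeries ℤ_[p]]
          (Submodule.torsion (PowerSeries ℤ_[p]) X)))))
    (hX : Nonempty
      ((X ⧸ LinearMap.range (((p : PowerSeries ℤ_[p])) •
          (LinearMap.id : X →ₗ[PowerSeries ℤ_[p]] X))) ≃ₗ[PowerSeries ℤ_[p]]
        (PowerSeries ℤ_[p] ⧸ Ideal.span {(p : PowerSeries ℤ_[p])}))) :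
    Nonempty (X ≃ₗ[PowerSeries ℤ_[p]] PowerSeries ℤ_[p]) := by
  obtain ⟨e⟩ := hX
  rw [LinearMap.range_smul_id] at hD e
  have hjac : (p : PowerSeries ℤ_[p]) ∈ Ideal.jacobson ⊥ := by
    rw [IsLocalRing.jacobson_eq_maximalIdeal ⊥ bot_ne_top, IsLocalRing.mem_maximalIdeal,
      mem_nonunits_iff, PowerSeries.isUnit_iff_constantCoeff, map_natCast]
    exact PadicInt.p_nonunit
  obtain ⟨x, hx⟩ := exists_span_singleton_eq_top_of_quotient_smul_equiv hjac e
  have hXp :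
      Infinite (X ⧸ (p : PowerSeries ℤ_[p]) • (⊤ : Submodule (PowerSeries ℤ_[p]) X)) := by
    have := PowerSeries.infinite_quotient_span_C (a := (p : ℤ_[p])) PadicInt.p_nonunit
    rw [map_natCast] at this
    exact .of_injective _ e.symm.injective
  have hinj := LinearMap.injective_toSpanSingleton_of_torsion_ne_top hx
    (ne_top_of_finite_quotient_smul_top hD hXp)
  have hsurj : Function.Surjective (LinearMap.toSpanSingleton (PowerSeries ℤ_[p]) X x) := by
    rw [← LinearMap.range_eq_top, ← LinearMap.span_singleton_eq_range, hx]
  exact ⟨(LinearEquiv.ofBijective _ ⟨hinj, hsurj⟩).symm⟩
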